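/- There is a universal constant c > 0 such that the following holds. For every n ≥ 1, every γ ∈ (0,1], and every amplitude vector f with characteristic distribution p and Weyl distribution q satisfying ∑_{x ∈ 𝔽₂^{2n}} q(x) · 2ⁿ · p(x) ≥ γ, there exists a finite set S ⊆ 𝔽₂^{2n} such that: (i) (γ²/80)·2ⁿ ≤ |S| ≤ (4/γ)·2ⁿ; (ii) every x ∈ S satisfies 2ⁿ·p(x) ≥ γ/4; (iii) |{(s,s') ∈ S × S : s + s' ∈ S}| ≥ c·γ⁵·|S|²; and (iv) 0 ∈ S. -/

import Mathlib

open Finset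

/-- The characteristic distribution of an amplitude vector `f : 𝔽₂ⁿ → ℂ`. -/
noncomputable def charDist (n : ℕ) (f : (Fin n → ZMod 2) → ℂ) :
    (Fin n → ZMod 2) × (Fin n → ZMod 2) → ℝ :=
  fun x =>
    ((2 : ℝ) ^ n)⁻¹ *
      ‖∑ y : Fin n → ZMod 2,
          f y * (starRingEnd ℂ) (f (y + x.1)) *
            (-1 : ℂ) ^ (∑ i, x.2 i * y i : ZMod 2).val‖ ^ 2

/-- The Weyl distribution `q(x) = ∑_y p(y)·p(x+y)`. -/
noncomputable def weylDist (n : ℕ) (f : (Fin n → ZMod 2) → ℂ) :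
    (Fin n → ZMod 2) × (Fin n → ZMod 2) → ℝ :=
  fun x => ∑ y : (Fin n → ZMod 2) × (Fin n → ZMod 2), charDist n f y * charDist n f (x + y)



noncomputable def chi (a : ZMod 2) : ℂ := (-1) ^ a.val

lemma zmod2_cases (a : ZMod 2) : a = 0 ∨ a = 1 := by
  fin_cases a
  · exact Or.inl rfl
  · exact Or.inr rfl

lemma chi_zero : chi 0 = 1 := by simp [chi]
lemma chi_one : chi 1 = -1 := by
  have : (1 : ZMod 2).val = 1 := rfl
  simp [chi, this]

lemma chi_add (a b : ZMod 2) : chi (a + b) = chi a * chi b := by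
  rcases zmod2_cases a with h | h <;> rcases zmod2_cases b with h' | h' <;>
    subst h <;> subst h' <;>
    simp [chi_zero, chi_one, show (1 : ZMod 2) + 1 = 0 from rfl]

lemma conj_chi (a : ZMod 2) : (starRingEnd ℂ) (chi a) = chi a := by
  rcases zmod2_cases a with h | h <;> subst h <;> simp [chi_zero, chi_one]

lemma chi_sum {ι : Type*} (s : Finset ι) (h : ι → ZMod 2) :
    chi (∑ i ∈ s, h i) = ∏ i ∈ s, chi (h i) := by
  classical
  induction s using Finset.induction with
  | empty => simp [chi_zero]
  | insert _ _ hx ih => rw [Finset.sum_insert hx, Finset.prod_insert hx, chi_add, ih]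

lemma univ_zmod2 : (Finset.univ : Finset (ZMod 2)) = {0, 1} := rfl

lemma sum_chi_zmod (c : ZMod 2) :
    ∑ b : ZMod 2, chi (b * c) = if c = 0 then 2 else 0 := by
  rcases zmod2_cases c with h | h <;> subst h <;>
    rw [univ_zmod2] <;>
    simp [chi_zero, chi_one]

lemma orth (n : ℕ) (t : Fin n → ZMod 2) :
    ∑ w : Fin n → ZMod 2, chi (∑ i, w i * t i) = if t = 0 then ((2 : ℂ) ^ n) else 0 := by
  classical
  have h1 : ∀ w : Fin n → ZMod 2, chi (∑ i, w i * t i) = ∏ i, chi (w i * t i) :=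
    fun w => chi_sum _ _
  simp_rw [h1]
  rw [← Fintype.prod_sum (fun i (b : ZMod 2) => chi (b * t i))]
  simp_rw [sum_chi_zmod]
  by_cases h : t = 0
  · subst h; simp
  · rw [if_neg h]
    obtain ⟨i, hi⟩ : ∃ i, t i ≠ 0 := by
      by_contra hc; push_neg at hc; exact h (funext hc)
    exact Finset.prod_eq_zero (Finset.mem_univ i) (by rw [if_neg hi])

lemma add_self_eq_zero_pi {n : ℕ} (y z : Fin n → ZMod 2) : y + z = 0 ↔ z = y := by
  constructor
  · intro h
    funext i
    have := congrFun h i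
    simp only [Pi.add_apply, Pi.zero_apply] at this
    rcases zmod2_cases (y i) with h1 | h1 <;> rcases zmod2_cases (z i) with h2 | h2 <;>
      rw [h1, h2] at this ⊢ <;> simp_all <;> rfl
  · intro h; subst h
    funext i
    simp only [Pi.add_apply, Pi.zero_apply]
    rcases zmod2_cases (z i) with h1 | h1 <;> rw [h1] <;> rfl

lemma parseval (n : ℕ) (a : (Fin n → ZMod 2) → ℂ) :
    ∑ w : Fin n → ZMod 2, ‖∑ y, a y * chi (∑ i, w i * y i)‖ ^ 2
      = 2 ^ n * ∑ y, ‖a y‖ ^ 2 := by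
  classical
  have key : ∑ w : Fin n → ZMod 2,
      (∑ y, a y * chi (∑ i, w i * y i)) *
        (starRingEnd ℂ) (∑ y, a y * chi (∑ i, w i * y i))
      = (2 : ℂ) ^ n * ∑ y, a y * (starRingEnd ℂ) (a y) := by
    have expand : ∀ w : Fin n → ZMod 2,
        (∑ y, a y * chi (∑ i, w i * y i)) *
          (starRingEnd ℂ) (∑ y, a y * chi (∑ i, w i * y i))
        = ∑ y, ∑ z, (a y * (starRingEnd ℂ) (a z)) * chi (∑ i, w i * (y + z) i) := by
      intro w
      rw [map_sum, Finset.sum_mul_sum]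
      refine Finset.sum_congr rfl fun y _ => Finset.sum_congr rfl fun z _ => ?_
      rw [map_mul, conj_chi]
      have : chi (∑ i, w i * y i) * chi (∑ i, w i * z i)
          = chi (∑ i, w i * (y + z) i) := by
        rw [← chi_add, ← Finset.sum_add_distrib]
        congr 1
        exact Finset.sum_congr rfl fun i _ => by simp [mul_add]
      rw [mul_mul_mul_comm, this]
    simp_rw [expand]
    rw [Finset.sum_comm]
    have : ∀ y : Fin n → ZMod 2,
        ∑ w : Fin n → ZMod 2, ∑ z, (a y * (starRingEnd ℂ) (a z)) * chi (∑ i, w i * (y + z) i)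
        = (2 : ℂ) ^ n * (a y * (starRingEnd ℂ) (a y)) := by
      intro y
      rw [Finset.sum_comm]
      have : ∀ z, ∑ w : Fin n → ZMod 2, (a y * (starRingEnd ℂ) (a z)) * chi (∑ i, w i * (y + z) i)
          = (a y * (starRingEnd ℂ) (a z)) * (if z = y then (2:ℂ)^n else 0) := by
        intro z
        rw [← Finset.mul_sum]
        congr 1
        have horth := orth n (y + z)
        rw [horth]
        simp only [add_self_eq_zero_pi]
      simp_rw [this]
      simp only [mul_ite, mul_zero, Finset.sum_ite_eq', Finset.mem_univ, if_true]
      ring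
    simp_rw [this]
    rw [Finset.mul_sum]
  have cast1 : ∀ z : ℂ, ((‖z‖ ^ 2 : ℝ) : ℂ) = z * (starRingEnd ℂ) z := by
    intro z
    rw [Complex.mul_conj, Complex.normSq_eq_norm_sq]
  have := key
  simp_rw [← cast1] at this
  have final : ((∑ w : Fin n → ZMod 2, ‖∑ y, a y * chi (∑ i, w i * y i)‖ ^ 2 : ℝ) : ℂ)
      = ((2 ^ n * ∑ y, ‖a y‖ ^ 2 : ℝ) : ℂ) := by
    push_cast
    exact_mod_cast this
  exact_mod_cast final
lemma charDist_eq (n : ℕ) (f : (Fin n → ZMod 2) → ℂ) (x) :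
    charDist n f x = ((2:ℝ)^n)⁻¹ *
      ‖∑ y, (f y * (starRingEnd ℂ) (f (y + x.1))) * chi (∑ i, x.2 i * y i)‖ ^ 2 := rfl

lemma charDist_nonneg (n : ℕ) (f : (Fin n → ZMod 2) → ℂ) (x) : 0 ≤ charDist n f x := by
  rw [charDist_eq]
  positivity

lemma sum_shift (n : ℕ) (f : (Fin n → ZMod 2) → ℝ) (v : Fin n → ZMod 2) :
    ∑ y : Fin n → ZMod 2, f (y + v) = ∑ y, f y :=
  Fintype.sum_equiv (Equiv.addRight v) _ _ (fun _ => rfl)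

lemma sum_charDist (n : ℕ) (f : (Fin n → ZMod 2) → ℂ)
    (hf : ∑ x : Fin n → ZMod 2, ‖f x‖ ^ 2 = 1) :
    ∑ x : (Fin n → ZMod 2) × (Fin n → ZMod 2), charDist n f x = 1 := by
  rw [Fintype.sum_prod_type]
  have inner : ∀ v : Fin n → ZMod 2,
      ∑ w : Fin n → ZMod 2, charDist n f (v, w)
        = ∑ y : Fin n → ZMod 2, ‖f y‖^2 * ‖f (y + v)‖^2 := by
    intro v
    simp_rw [charDist_eq]
    rw [← Finset.mul_sum]
    have hp := parseval n (fun y => f y * (starRingEnd ℂ) (f (y + v)))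
    have hip : ∀ w y : Fin n → ZMod 2, (∑ i, w i * y i) = (∑ i, (v,w).2 i * y i) := fun _ _ => rfl
    rw [show (∑ w : Fin n → ZMod 2,
        ‖∑ y, (f y * (starRingEnd ℂ) (f (y + (v, w).1))) * chi (∑ i, (v,w).2 i * y i)‖ ^ 2)
      = ∑ w : Fin n → ZMod 2, ‖∑ y, (fun y => f y * (starRingEnd ℂ) (f (y + v))) y * chi (∑ i, w i * y i)‖ ^ 2 from rfl, hp]
    rw [← mul_assoc, inv_mul_cancel₀ (by positivity), one_mul]
    refine Finset.sum_congr rfl fun y _ => ?_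
    rw [norm_mul, RingHomIsometric.norm_map, mul_pow]
  simp_rw [inner]
  rw [Finset.sum_comm]
  have : ∀ y : Fin n → ZMod 2, ∑ v : Fin n → ZMod 2, ‖f y‖^2 * ‖f (y + v)‖^2 = ‖f y‖^2 := by
    intro y
    rw [← Finset.mul_sum]
    have : ∑ v : Fin n → ZMod 2, ‖f (y + v)‖^2 = ∑ u, ‖f u‖^2 :=
      Fintype.sum_equiv (Equiv.addLeft y) _ _ (fun _ => rfl)
    rw [this, hf, mul_one]
  simp_rw [this]
  exact hf

lemma charDist_le (n : ℕ) (f : (Fin n → ZMod 2) → ℂ)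
    (hf : ∑ x : Fin n → ZMod 2, ‖f x‖ ^ 2 = 1) (x) :
    (2:ℝ)^n * charDist n f x ≤ 1 := by
  rw [charDist_eq, ← mul_assoc, mul_inv_cancel₀ (by positivity), one_mul]
  have h1 : ‖∑ y, (f y * (starRingEnd ℂ) (f (y + x.1))) * chi (∑ i, x.2 i * y i)‖
      ≤ ∑ y, ‖f y‖ * ‖f (y + x.1)‖ := by
    refine (norm_sum_le _ _).trans ?_
    refine Finset.sum_le_sum fun y _ => ?_
    rw [norm_mul, norm_mul, RingHomIsometric.norm_map]
    have hchi : ‖chi (∑ i, x.2 i * y i)‖ = 1 := by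
      rcases zmod2_cases (∑ i, x.2 i * y i) with h | h <;> rw [h] <;>
        simp [chi_zero, chi_one]
    rw [hchi, mul_one]
  have h2 : (∑ y, ‖f y‖ * ‖f (y + x.1)‖) ^ 2 ≤ 1 := by
    refine le_trans (Finset.sum_mul_sq_le_sq_mul_sq _ _ _) ?_
    rw [hf, one_mul]
    rw [show (∑ y : Fin n → ZMod 2, ‖f (y + x.1)‖ ^ 2) = 1 from
      (sum_shift n (fun y => ‖f y‖^2) x.1).trans hf]
  calc ‖∑ y, (f y * (starRingEnd ℂ) (f (y + x.1))) * chi (∑ i, x.2 i * y i)‖ ^ 2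
      ≤ (∑ y, ‖f y‖ * ‖f (y + x.1)‖) ^ 2 := by
        apply pow_le_pow_left₀ (norm_nonneg _) h1
    _ ≤ 1 := h2

lemma charDist_zero (n : ℕ) (f : (Fin n → ZMod 2) → ℂ)
    (hf : ∑ x : Fin n → ZMod 2, ‖f x‖ ^ 2 = 1) :
    charDist n f 0 = ((2:ℝ)^n)⁻¹ := by
  rw [charDist_eq]
  have : ∀ y : Fin n → ZMod 2,
      (f y * (starRingEnd ℂ) (f (y + (0 : (Fin n → ZMod 2) × (Fin n → ZMod 2)).1)))
        * chi (∑ i, (0 : (Fin n → ZMod 2) × (Fin n → ZMod 2)).2 i * y i)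
      = ((‖f y‖^2 : ℝ) : ℂ) := by
    intro y
    have h0 : (0 : (Fin n → ZMod 2) × (Fin n → ZMod 2)).1 = 0 := rfl
    have h02 : (0 : (Fin n → ZMod 2) × (Fin n → ZMod 2)).2 = 0 := rfl
    rw [h0, h02, add_zero]
    simp only [Pi.zero_apply, zero_mul, Finset.sum_const_zero, chi_zero, mul_one]
    rw [Complex.mul_conj, Complex.normSq_eq_norm_sq]
  simp_rw [this]
  rw [← Complex.ofReal_sum, hf]
  simp


section Aux
variable {G : Type*} [AddCommGroup G] [Fintype G]

lemma sum_shift' (f : G → ℝ) (v : G) : ∑ y : G, f (y + v) = ∑ y, f y :=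
  Fintype.sum_equiv (Equiv.addRight v) _ _ (fun _ => rfl)

lemma sum_shiftL (f : G → ℝ) (v : G) : ∑ y : G, f (v + y) = ∑ y, f y :=
  Fintype.sum_equiv (Equiv.addLeft v) _ _ (fun _ => rfl)

end Aux

set_option maxHeartbeats 1000000 in
/-- abstract combinatorial core -/
lemma core {G : Type*} [AddCommGroup G] [Fintype G] [DecidableEq G]
    (g : G → ℝ) (N γ : ℝ) (hN : 0 < N) (hγ0 : 0 < γ) (hγ1 : γ ≤ 1)
    (h2 : ∀ a : G, a + a = 0)
    (hg0 : ∀ x, 0 ≤ g x) (hg1 : ∀ x, g x ≤ 1) (hgsum : ∑ x, g x = N)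
    (hgz : g 0 = 1)
    (htriple : γ * N ^ 2 ≤ ∑ y : G, ∑ z : G, g y * g z * g (y + z)) :
    ∃ S : Finset G,
      (γ ^ 2 / 80) * N ≤ (S.card : ℝ) ∧
      (S.card : ℝ) ≤ (4 / γ) * N ∧
      (∀ x ∈ S, g x ≥ γ / 4) ∧
      (1/64 : ℝ) * γ ^ 5 * (S.card : ℝ) ^ 2 ≤
        (((S ×ˢ S).filter (fun q => q.1 + q.2 ∈ S)).card : ℝ) ∧
      (0 : G) ∈ S := by
  classical
  set S : Finset G := Finset.univ.filter (fun x => γ / 4 ≤ g x) with hS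
  have hmemS : ∀ x, x ∈ S ↔ γ / 4 ≤ g x := by
    intro x; simp [hS]
  have hzS : (0 : G) ∈ S := (hmemS 0).2 (by rw [hgz]; linarith)
  -- card * (γ/4) ≤ N
  have hSsum : (S.card : ℝ) * (γ / 4) ≤ N := by
    have h1 : (S.card : ℝ) * (γ / 4) = ∑ _x ∈ S, (γ / 4) := by
      rw [Finset.sum_const, nsmul_eq_mul]
    rw [h1, ← hgsum]
    refine le_trans (Finset.sum_le_sum fun x hx => (hmemS x).1 hx) ?_
    exact Finset.sum_le_sum_of_subset_of_nonneg (Finset.subset_univ S) (fun x _ _ => hg0 x)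
  set T : Finset (G × G) := (S ×ˢ S).filter (fun q => q.1 + q.2 ∈ S) with hT
  -- the big count
  have hTcard : (γ / 4) * N ^ 2 ≤ (T.card : ℝ) := by
    set F : G × G → ℝ := fun q => g q.1 * g q.2 * g (q.1 + q.2) with hF
    have hF0 : ∀ q, 0 ≤ F q := fun q => by
      have := hg0 q.1; have := hg0 q.2; have := hg0 (q.1 + q.2); positivity
    have hsplit : ∑ q : G × G, F q =
        ∑ q ∈ Finset.univ.filter (fun q : G × G => q ∈ T), F q +
        ∑ q ∈ Finset.univ.filter (fun q : G × G => ¬ q ∈ T), F q :=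
      (Finset.sum_filter_add_sum_filter_not _ _ _).symm
    have hb1 : ∑ q ∈ Finset.univ.filter (fun q : G × G => q ∈ T), F q ≤ (T.card : ℝ) := by
      have : Finset.univ.filter (fun q : G × G => q ∈ T) = T := by
        ext q; simp
      rw [this]
      calc ∑ q ∈ T, F q ≤ ∑ _q ∈ T, (1:ℝ) := by
            refine Finset.sum_le_sum fun q _ => ?_
            show g q.1 * g q.2 * g (q.1 + q.2) ≤ 1
            have h1 := hg1 q.1; have h2' := hg1 q.2; have h3 := hg1 (q.1 + q.2)
            have n1 := hg0 q.1; have n2 := hg0 q.2; have n3 := hg0 (q.1 + q.2)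
            exact mul_le_one₀ (mul_le_one₀ h1 n2 h2') n3 h3
        _ = (T.card : ℝ) := by rw [Finset.sum_const, nsmul_eq_mul, mul_one]
    have hsum1 : ∑ q : G × G, g q.1 * g q.2 = N ^ 2 := by
      rw [Fintype.sum_prod_type]
      simp_rw [← Finset.mul_sum, ← Finset.sum_mul, hgsum]
      ring
    have hsum2 : ∑ q : G × G, g q.2 * g (q.1 + q.2) = N ^ 2 := by
      rw [Fintype.sum_prod_type, Finset.sum_comm]
      have : ∀ z : G, ∑ y : G, g z * g (y + z) = g z * N := by
        intro z; rw [← Finset.mul_sum, sum_shift' g z, hgsum]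
      simp_rw [this, ← Finset.sum_mul, hgsum]
      ring
    have hsum3 : ∑ q : G × G, g q.1 * g (q.1 + q.2) = N ^ 2 := by
      rw [Fintype.sum_prod_type]
      have : ∀ y : G, ∑ z : G, g y * g (y + z) = g y * N := by
        intro y; rw [← Finset.mul_sum, sum_shiftL g y, hgsum]
      simp_rw [this, ← Finset.sum_mul, hgsum]
      ring
    have hb2 : ∑ q ∈ Finset.univ.filter (fun q : G × G => ¬ q ∈ T), F q
        ≤ (γ / 4) * (3 * N ^ 2) := by
      have hpt : ∀ q ∈ Finset.univ.filter (fun q : G × G => ¬ q ∈ T), F q ≤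
          (γ / 4) * (g q.1 * g q.2 + g q.2 * g (q.1 + q.2) + g q.1 * g (q.1 + q.2)) := by
        intro q hq
        rw [Finset.mem_filter] at hq
        have hq' := hq.2
        have : ¬ (q.1 ∈ S ∧ q.2 ∈ S ∧ q.1 + q.2 ∈ S) := by
          intro ⟨h1, h2', h3⟩
          exact hq' (by rw [hT]; exact Finset.mem_filter.2 ⟨Finset.mem_product.2 ⟨h1, h2'⟩, h3⟩)
        have n1 := hg0 q.1; have n2 := hg0 q.2; have n3 := hg0 (q.1 + q.2)
        have hq4 : (0:ℝ) ≤ γ / 4 := by linarith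
        show g q.1 * g q.2 * g (q.1 + q.2) ≤ _
        push_neg at this
        by_cases c1 : q.1 ∈ S
        · by_cases c2 : q.2 ∈ S
          · have c3 := this c1 c2
            have : g (q.1 + q.2) < γ / 4 := by
              by_contra hcon; push_neg at hcon; exact c3 ((hmemS _).2 hcon)
            have e1 := mul_le_mul_of_nonneg_left this.le (mul_nonneg n1 n2)
            nlinarith [mul_nonneg hq4 (mul_nonneg n2 n3), mul_nonneg hq4 (mul_nonneg n1 n3)]
          · have : g q.2 < γ / 4 := by
              by_contra hcon; push_neg at hcon; exact c2 ((hmemS _).2 hcon)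
            have e1 := mul_le_mul_of_nonneg_left this.le (mul_nonneg n1 n3)
            nlinarith [mul_nonneg hq4 (mul_nonneg n2 n3), mul_nonneg hq4 (mul_nonneg n1 n2)]
        · have : g q.1 < γ / 4 := by
            by_contra hcon; push_neg at hcon; exact c1 ((hmemS _).2 hcon)
          have e1 := mul_le_mul_of_nonneg_left this.le (mul_nonneg n2 n3)
          nlinarith [mul_nonneg hq4 (mul_nonneg n1 n3), mul_nonneg hq4 (mul_nonneg n1 n2)]
      calc ∑ q ∈ Finset.univ.filter (fun q : G × G => ¬ q ∈ T), F q
          ≤ ∑ q ∈ Finset.univ.filter (fun q : G × G => ¬ q ∈ T),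
              (γ / 4) * (g q.1 * g q.2 + g q.2 * g (q.1 + q.2) + g q.1 * g (q.1 + q.2)) :=
            Finset.sum_le_sum hpt
        _ ≤ ∑ q : G × G,
              (γ / 4) * (g q.1 * g q.2 + g q.2 * g (q.1 + q.2) + g q.1 * g (q.1 + q.2)) := by
            refine Finset.sum_le_sum_of_subset_of_nonneg (Finset.subset_univ _) fun q _ _ => ?_
            have n1 := hg0 q.1; have n2 := hg0 q.2; have n3 := hg0 (q.1 + q.2)
            positivity
        _ = (γ / 4) * (3 * N ^ 2) := by
            rw [← Finset.mul_sum]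
            congr 1
            rw [Finset.sum_add_distrib, Finset.sum_add_distrib, hsum1, hsum2, hsum3]
            ring
    have htot : γ * N ^ 2 ≤ ∑ q : G × G, F q := by
      rw [Fintype.sum_prod_type]
      exact htriple
    linarith [hsplit ▸ htot, hb1, hb2]
  have hTS : (T.card : ℝ) ≤ (S.card : ℝ) ^ 2 := by
    have : T ⊆ S ×ˢ S := Finset.filter_subset _ _
    have := Finset.card_le_card this
    have hcp : (S ×ˢ S).card = S.card * S.card := Finset.card_product _ _
    have : (T.card : ℝ) ≤ ((S.card * S.card : ℕ) : ℝ) := by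
      exact_mod_cast le_trans this (le_of_eq hcp)
    push_cast at this
    nlinarith
  have hcard_pos : (0:ℝ) ≤ (S.card : ℝ) := Nat.cast_nonneg _
  refine ⟨S, ?_, ?_, ?_, ?_, hzS⟩
  · -- lower bound on card
    have h1 : ((γ/2) * N) ^ 2 ≤ (S.card : ℝ) ^ 2 := by nlinarith
    have ha : (0:ℝ) ≤ (γ/2) * N := by positivity
    have h2' : (γ/2) * N ≤ (S.card : ℝ) := by
      have := Real.sqrt_le_sqrt h1
      rwa [Real.sqrt_sq ha, Real.sqrt_sq hcard_pos] at this
    nlinarith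
  · -- upper bound on card
    rw [div_mul_eq_mul_div, le_div_iff₀ hγ0]
    linarith
  · intro x hx; exact (hmemS x).1 hx
  · -- approximate closure
    have hN2 : ((γ/4) * (S.card : ℝ)) ^ 2 ≤ N ^ 2 := by
      have h := mul_self_le_mul_self (by positivity : (0:ℝ) ≤ (S.card:ℝ) * (γ/4)) hSsum
      nlinarith [h]
    have hpow : γ ^ 5 ≤ γ ^ 3 := pow_le_pow_of_le_one hγ0.le hγ1 (by norm_num)
    calc (1/64 : ℝ) * γ ^ 5 * (S.card : ℝ) ^ 2
        ≤ (γ / 4) * ((γ/4) * (S.card : ℝ)) ^ 2 := by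
          have h := mul_le_mul_of_nonneg_right hpow (sq_nonneg ((S.card : ℝ)))
          nlinarith [h]
      _ ≤ (γ / 4) * N ^ 2 := by
          have : (0:ℝ) ≤ γ / 4 := by linarith
          exact mul_le_mul_of_nonneg_left hN2 this
      _ ≤ (T.card : ℝ) := hTcard

/-- existence of a large approximate subgroup of Paulis with
high expectation values, given a high second moment under the Weyl distribution. -/
theorem stmt_7 :
    ∃ c : ℝ, 0 < c ∧
      ∀ n : ℕ, 1 ≤ n → ∀ γ : ℝ, γ ∈ Set.Ioc (0 : ℝ) 1 →
        ∀ f : (Fin n → ZMod 2) → ℂ, (∑ x : Fin n → ZMod 2, ‖f x‖ ^ 2 = 1) →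
          (∑ x : (Fin n → ZMod 2) × (Fin n → ZMod 2),
              weylDist n f x * ((2 : ℝ) ^ n * charDist n f x)) ≥ γ →
          ∃ S : Finset ((Fin n → ZMod 2) × (Fin n → ZMod 2)),
            (γ ^ 2 / 80) * 2 ^ n ≤ (S.card : ℝ) ∧
            (S.card : ℝ) ≤ (4 / γ) * 2 ^ n ∧
            (∀ x ∈ S, (2 : ℝ) ^ n * charDist n f x ≥ γ / 4) ∧
            c * γ ^ 5 * (S.card : ℝ) ^ 2 ≤
              (((S ×ˢ S).filter (fun q => q.1 + q.2 ∈ S)).card : ℝ) ∧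
            (0 : (Fin n → ZMod 2) × (Fin n → ZMod 2)) ∈ S := by
  refine ⟨1/64, by norm_num, ?_⟩
  intro n hn γ hγ f hf hyp
  obtain ⟨hγ0, hγ1⟩ := hγ
  set G := (Fin n → ZMod 2) × (Fin n → ZMod 2)
  set N : ℝ := (2:ℝ)^n with hNdef
  have hN : 0 < N := by positivity
  set g : G → ℝ := fun x => N * charDist n f x with hg
  have h2 : ∀ a : G, a + a = 0 := by
    intro a
    have e1 : a.1 + a.1 = 0 := funext fun i => by
      rcases zmod2_cases (a.1 i) with h | h <;>
        simp only [Pi.add_apply, Pi.zero_apply, h] <;> rfl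
    have e2 : a.2 + a.2 = 0 := funext fun i => by
      rcases zmod2_cases (a.2 i) with h | h <;>
        simp only [Pi.add_apply, Pi.zero_apply, h] <;> rfl
    exact Prod.ext e1 e2
  have haa : ∀ a b : G, (a + b) + a = b := by
    intro a b
    have : (a + b) + a = b + (a + a) := by abel
    rw [this, h2, add_zero]
  have hg0 : ∀ x, 0 ≤ g x := fun x => by
    have := charDist_nonneg n f x; simp only [hg]; positivity
  have hg1 : ∀ x, g x ≤ 1 := fun x => charDist_le n f hf x
  have hgsum : ∑ x : G, g x = N := by
    simp only [hg]
    rw [← Finset.mul_sum, sum_charDist n f hf, mul_one]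
  have hgz : g 0 = 1 := by
    simp only [hg]
    rw [charDist_zero n f hf, hNdef]
    field_simp
  have key : ∑ x : G, weylDist n f x * (N * charDist n f x) * N ^ 2
      = ∑ y : G, ∑ z : G, g y * g z * g (y + z) := by
    have step1 : ∀ x : G, weylDist n f x * (N * charDist n f x) * N ^ 2
        = ∑ y : G, g y * g (x + y) * g x := by
      intro x
      rw [weylDist, Finset.sum_mul, Finset.sum_mul]
      refine Finset.sum_congr rfl fun y _ => ?_
      simp only [hg]
      ring
    simp_rw [step1]
    rw [Finset.sum_comm]
    refine Finset.sum_congr rfl fun y _ => ?_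
    refine (Fintype.sum_equiv (Equiv.addLeft y)
      (fun z => g y * g z * g (y + z)) (fun x => g y * g (x + y) * g x) ?_).symm
    intro z
    simp only [Equiv.coe_addLeft]
    rw [haa y z]
  have htriple : γ * N ^ 2 ≤ ∑ y : G, ∑ z : G, g y * g z * g (y + z) := by
    rw [← key, ← Finset.sum_mul]
    have := mul_le_mul_of_nonneg_right hyp (le_of_lt (by positivity : (0:ℝ) < N ^ 2))
    linarith [mul_le_mul_of_nonneg_right hyp.le (sq_nonneg N)]
  obtain ⟨S, hc1, hc2, hc3, hc4, hc5⟩ :=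
    core g N γ hN hγ0 hγ1 h2 hg0 hg1 hgsum hgz htriple
  exact ⟨S, hc1, hc2, hc3, hc4, hc5⟩
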